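/- For every real x and every integer n ≥ 0, the neutrix limit as ε → 0⁺ of ∫_ε^{1−ε} t^{x−1} (log t)^n / (1−t) dt exists; that is, there exist a real number c and a negligible function N(ε) such that ∫_ε^{1−ε} t^{x−1} (log t)^n / (1−t) dt − N(ε) tends to c as ε → 0⁺. -/

import Mathlib

open MeasureTheory Real Filter Set

/-- A negligible function: a finite real linear combination of `ε ↦ ε^λ (log ε)^k`
with `λ < 0` real and `k ∈ ℕ`, and `ε ↦ (log ε)^k` with `k ≥ 1`. -/
def Negligible (N : ℝ → ℝ) : Prop :=
  ∃ (s : Finset (ℝ × ℕ)) (c : ℝ × ℕ → ℝ) (T : Finset ℕ) (d : ℕ → ℝ),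
    (∀ p ∈ s, p.1 < 0) ∧ (∀ k ∈ T, 1 ≤ k) ∧
    ∀ ε : ℝ, N ε = (∑ p ∈ s, c p * ε ^ p.1 * Real.log ε ^ p.2) +
      ∑ k ∈ T, d k * Real.log ε ^ k

/-- `NeutrixLim F c` : the neutrix limit of `F ε` as `ε → 0⁺` is `c`, i.e. there is a
negligible function `N` with `F ε − N ε → c` as `ε → 0⁺`. -/
def NeutrixLim (F : ℝ → ℝ) (c : ℝ) : Prop :=
  ∃ N : ℝ → ℝ, Negligible N ∧
    Tendsto (fun ε => F ε - N ε) (nhdsWithin 0 (Set.Ioi 0)) (nhds c)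

/-! Split the integral at `1 / 2`. Near `0`, expand
`1 / (1 - t) = 1 + t + ⋯ + t ^ (m - 1) + t ^ m / (1 - t)` with `m` so large that the last term is
integrable at `0`; each `∫_ε t ^ b (log t) ^ n dt` is, by repeated integration by parts, a constant
plus a negligible function plus a function tending to `0`. Near `1`, substitute `s = 1 - t` and write
`h s / s = dslope h 0 s + h 0 / s`: the slope is continuous up to `s = 0`, and `∫_ε h 0 / s ds` is a
constant minus `h 0 * log ε`. -/

open Topology

def HasNeutrixLim (F : ℝ → ℝ) : Prop := ∃ c, NeutrixLim F c

namespace Negligible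

theorem zero : Negligible fun _ => 0 :=
  ⟨∅, 0, ∅, 0, by simp, by simp, by simp⟩

theorem add {N M : ℝ → ℝ} (hN : Negligible N) (hM : Negligible M) :
    Negligible fun ε => N ε + M ε := by
  classical
  obtain ⟨s₁, c₁, T₁, d₁, hs₁, hT₁, h₁⟩ := hN
  obtain ⟨s₂, c₂, T₂, d₂, hs₂, hT₂, h₂⟩ := hM
  refine ⟨s₁ ∪ s₂, fun p => (if p ∈ s₁ then c₁ p else 0) + (if p ∈ s₂ then c₂ p else 0),
    T₁ ∪ T₂, fun k => (if k ∈ T₁ then d₁ k else 0) + (if k ∈ T₂ then d₂ k else 0),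
    by simpa [or_imp, forall_and] using And.intro hs₁ hs₂,
    by simpa [or_imp, forall_and] using And.intro hT₁ hT₂, fun ε => ?_⟩
  simp only [h₁, h₂, add_mul, ite_mul, zero_mul, Finset.sum_add_distrib, Finset.sum_ite_mem,
    Finset.union_inter_cancel_left, Finset.union_inter_cancel_right]
  ring

theorem const_mul {N : ℝ → ℝ} (a : ℝ) (hN : Negligible N) : Negligible fun ε => a * N ε := by
  obtain ⟨s, c, T, d, hs, hT, h⟩ := hN
  refine ⟨s, a • c, T, a • d, hs, hT, fun ε => ?_⟩
  simp only [h, mul_add, Finset.mul_sum, Pi.smul_apply, smul_eq_mul, mul_assoc]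

theorem rpow_mul_log_pow {l : ℝ} (hl : l < 0) (k : ℕ) :
    Negligible fun ε => ε ^ l * log ε ^ k :=
  ⟨{(l, k)}, 1, ∅, 0, by simpa using hl, by simp, by simp⟩

theorem log_pow {k : ℕ} (hk : 1 ≤ k) : Negligible fun ε => log ε ^ k :=
  ⟨∅, 0, {k}, 1, by simp, by simpa using hk, by simp⟩

end Negligible

namespace HasNeutrixLim

theorem of_tendsto {F : ℝ → ℝ} {c : ℝ} (h : Tendsto F (𝓝[>] 0) (𝓝 c)) : HasNeutrixLim F :=
  ⟨c, 0, Negligible.zero, by simpa using h⟩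

theorem const (c : ℝ) : HasNeutrixLim fun _ => c :=
  of_tendsto tendsto_const_nhds

theorem of_negligible {N : ℝ → ℝ} (h : Negligible N) : HasNeutrixLim N :=
  ⟨0, N, h, by simp⟩

theorem add {F G : ℝ → ℝ} (hF : HasNeutrixLim F) (hG : HasNeutrixLim G) :
    HasNeutrixLim fun ε => F ε + G ε := by
  obtain ⟨c₁, N₁, hN₁, h₁⟩ := hF
  obtain ⟨c₂, N₂, hN₂, h₂⟩ := hG
  exact ⟨c₁ + c₂, _, hN₁.add hN₂, (h₁.add h₂).congr fun ε => by ring⟩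

theorem const_mul {F : ℝ → ℝ} (a : ℝ) (hF : HasNeutrixLim F) :
    HasNeutrixLim fun ε => a * F ε := by
  obtain ⟨c, N, hN, h⟩ := hF
  exact ⟨a * c, _, hN.const_mul a, (h.const_mul a).congr fun ε => by ring⟩

theorem sub {F G : ℝ → ℝ} (hF : HasNeutrixLim F) (hG : HasNeutrixLim G) :
    HasNeutrixLim fun ε => F ε - G ε := by
  simpa [← sub_eq_add_neg] using hF.add (hG.const_mul (-1))

theorem congr {F G : ℝ → ℝ} (hF : HasNeutrixLim F) (h : F =ᶠ[𝓝[>] 0] G) : HasNeutrixLim G := by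
  obtain ⟨c, N, hN, ht⟩ := hF
  exact ⟨c, N, hN, ht.congr' (h.mono fun ε hε => by rw [hε])⟩

end HasNeutrixLim

theorem tendsto_rpow_mul_log_pow_nhdsGT_zero {a : ℝ} (ha : 0 < a) (n : ℕ) :
    Tendsto (fun t => t ^ a * log t ^ n) (𝓝[>] 0) (𝓝 0) := by
  have h :=
    (isLittleO_abs_log_rpow_rpow_nhdsGT_zero (n : ℝ) (neg_lt_zero.2 ha)).tendsto_div_nhds_zero
  rw [tendsto_zero_iff_norm_tendsto_zero]
  refine h.congr' ?_
  filter_upwards [self_mem_nhdsWithin] with t (ht : 0 < t)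
  rw [norm_mul, norm_pow, Real.norm_eq_abs, Real.norm_eq_abs, abs_of_pos (rpow_pos_of_pos ht a),
    rpow_natCast, rpow_neg ht.le, div_inv_eq_mul, mul_comm]

theorem hasNeutrixLim_rpow_mul_log_pow (μ : ℝ) (j : ℕ) :
    HasNeutrixLim fun ε => ε ^ μ * log ε ^ j := by
  rcases lt_trichotomy μ 0 with hμ | rfl | hμ
  · exact .of_negligible (.rpow_mul_log_pow hμ j)
  · rcases j.eq_zero_or_pos with rfl | hj
    · simpa using HasNeutrixLim.const 1
    · simpa using HasNeutrixLim.of_negligible (.log_pow hj)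
  · exact .of_tendsto (tendsto_rpow_mul_log_pow_nhdsGT_zero hμ j)

theorem continuousOn_rpow_mul_log_pow (a : ℝ) (n : ℕ) :
    ContinuousOn (fun t => t ^ a * log t ^ n) (Ioi 0) :=
  (continuousOn_id.rpow_const fun _ ht => Or.inl (ne_of_gt ht)).mul
    ((continuousOn_log.mono fun _ ht => ne_of_gt ht).pow n)

theorem intervalIntegrable_rpow_mul_log_pow (a : ℝ) (n : ℕ) {u v : ℝ} (hu : 0 < u) (hv : 0 < v) :
    IntervalIntegrable (fun t => t ^ a * log t ^ n) volume u v :=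
  ((continuousOn_rpow_mul_log_pow a n).mono
    fun _ ht => (lt_min hu hv).trans_le ht.1).intervalIntegrable

theorem hasNeutrixLim_integral_of_integrableOn {f : ℝ → ℝ} {c : ℝ} (hc : 0 < c)
    (hf : IntegrableOn f (Icc 0 c)) : HasNeutrixLim fun ε => ∫ t in ε..c, f t := by
  rw [← uIcc_of_le hc.le] at hf
  have hcont := intervalIntegral.continuousOn_primitive_interval_left hf 0 left_mem_uIcc
  rw [uIcc_of_le hc.le] at hcont
  exact .of_tendsto (hcont.mono_of_mem_nhdsWithin (Icc_mem_nhdsGT hc))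

theorem integral_inv_mul_log_pow (n : ℕ) {u v : ℝ} (hu : 0 < u) (hv : 0 < v) :
    ∫ t in u..v, t ^ (-1 : ℝ) * log t ^ n = (log v ^ (n + 1) - log u ^ (n + 1)) / (n + 1) := by
  rw [eq_div_iff (by positivity), ← intervalIntegral.integral_mul_const]
  refine intervalIntegral.integral_eq_sub_of_hasDerivAt (f := fun t => log t ^ (n + 1))
    (fun t ht => ?_) ?_
  · have ht : 0 < t := (lt_min hu hv).trans_le ht.1
    refine ((hasDerivAt_log ht.ne').pow (n + 1)).congr_deriv ?_
    rw [rpow_neg_one]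
    push_cast
    ring
  · exact (intervalIntegrable_rpow_mul_log_pow _ n hu hv).mul_const _

theorem hasDerivAt_rpow_mul_log_pow_succ (b : ℝ) (n : ℕ) {t : ℝ} (ht : 0 < t) :
    HasDerivAt (fun t => t ^ (b + 1) * log t ^ (n + 1))
      ((b + 1) * (t ^ b * log t ^ (n + 1)) + (n + 1) * (t ^ b * log t ^ n)) t := by
  refine ((hasDerivAt_rpow_const (p := b + 1) (Or.inl ht.ne')).mul
    ((hasDerivAt_log ht.ne').pow (n + 1))).congr_deriv ?_
  rw [add_sub_cancel_right, rpow_add_one ht.ne']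
  simp only [Pi.pow_apply]
  push_cast
  field_simp

theorem hasNeutrixLim_integral_rpow_mul_log_pow (b : ℝ) (n : ℕ) {c : ℝ} (hc : 0 < c) :
    HasNeutrixLim fun ε => ∫ t in ε..c, t ^ b * log t ^ n := by
  by_cases hb : b = -1
  · subst hb
    refine ((HasNeutrixLim.const (log c ^ (n + 1))).sub
      (.of_negligible (.log_pow n.succ_pos))).const_mul (n + 1 : ℝ)⁻¹ |>.congr ?_
    filter_upwards [self_mem_nhdsWithin] with ε (hε : 0 < ε)
    rw [integral_inv_mul_log_pow n hε hc, div_eq_inv_mul]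
  have hb' : b + 1 ≠ 0 := fun h => hb (by linarith)
  induction n with
  | zero =>
    refine ((HasNeutrixLim.const (c ^ (b + 1))).sub (hasNeutrixLim_rpow_mul_log_pow (b + 1) 0)
      |>.const_mul (b + 1)⁻¹).congr ?_
    filter_upwards [self_mem_nhdsWithin] with ε (hε : 0 < ε)
    have h0 : (0 : ℝ) ∉ uIcc ε c := fun h => (lt_min hε hc).not_ge h.1
    simp only [pow_zero, mul_one, integral_rpow (Or.inr ⟨hb, h0⟩)]
    ring
  | succ n ih =>
    -- integration by parts against `t ^ (b + 1) / (b + 1)`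
    refine ((((HasNeutrixLim.const (c ^ (b + 1) * log c ^ (n + 1))).sub
      (hasNeutrixLim_rpow_mul_log_pow (b + 1) (n + 1))).sub (ih.const_mul (n + 1)))
      |>.const_mul (b + 1)⁻¹).congr ?_
    filter_upwards [self_mem_nhdsWithin] with ε (hε : 0 < ε)
    have hI₁ := (intervalIntegrable_rpow_mul_log_pow b (n + 1) hε hc).const_mul (b + 1)
    have hI₂ := (intervalIntegrable_rpow_mul_log_pow b n hε hc).const_mul ((n : ℝ) + 1)
    have hparts := intervalIntegral.integral_eq_sub_of_hasDerivAt
      (fun t ht => hasDerivAt_rpow_mul_log_pow_succ b n ((lt_min hε hc).trans_le ht.1))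
      (hI₁.add hI₂)
    rw [intervalIntegral.integral_add hI₁ hI₂, intervalIntegral.integral_const_mul,
      intervalIntegral.integral_const_mul] at hparts
    field_simp
    linarith

theorem continuousOn_rpow_mul_log_pow_Ici {a : ℝ} (ha : 0 < a) (n : ℕ) :
    ContinuousOn (fun t => t ^ a * log t ^ n) (Ici 0) := by
  intro t ht
  rcases (mem_Ici.1 ht).eq_or_lt with rfl | ht
  · rw [← continuousWithinAt_Ioi_iff_Ici, ContinuousWithinAt, zero_rpow ha.ne', zero_mul]
    exact tendsto_rpow_mul_log_pow_nhdsGT_zero ha n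
  · exact ((continuousOn_rpow_mul_log_pow a n).continuousAt (Ioi_mem_nhds ht)).continuousWithinAt

theorem continuousOn_rpow_mul_log_pow_div_one_sub (a : ℝ) (n : ℕ) :
    ContinuousOn (fun t => t ^ a * log t ^ n / (1 - t)) (Ioo 0 1) :=
  ((continuousOn_rpow_mul_log_pow a n).mono Ioo_subset_Ioi_self).div
    (continuousOn_const.sub continuousOn_id) fun _ ht => sub_ne_zero.2 ht.2.ne'

theorem hasNeutrixLim_integral_rpow_mul_log_pow_div_one_sub (m : ℕ) {a : ℝ} (ha : 0 < a + m)
    (n : ℕ) {c : ℝ} (hc₀ : 0 < c) (hc₁ : c < 1) :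
    HasNeutrixLim fun ε => ∫ t in ε..c, t ^ a * log t ^ n / (1 - t) := by
  induction m generalizing a with
  | zero =>
    rw [Nat.cast_zero, add_zero] at ha
    refine hasNeutrixLim_integral_of_integrableOn hc₀ (ContinuousOn.integrableOn_Icc ?_)
    exact ((continuousOn_rpow_mul_log_pow_Ici ha n).mono Icc_subset_Ici_self).div
      (continuousOn_const.sub continuousOn_id) fun t ht => sub_ne_zero.2 (ht.2.trans_lt hc₁).ne'
  | succ m ih =>
    -- peel one term off the geometric series: `1 / (1 - t) = 1 + t / (1 - t)`
    refine ((hasNeutrixLim_integral_rpow_mul_log_pow a n hc₀).add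
      (ih (a := a + 1) (by push_cast at ha; linarith))).congr ?_
    filter_upwards [Ioo_mem_nhdsGT hc₀] with ε hε
    have hsub : uIcc ε c ⊆ Ioo 0 1 := by
      rw [uIcc_of_le hε.2.le]; exact Icc_subset_Ioo hε.1 hc₁
    rw [← intervalIntegral.integral_add
      (intervalIntegrable_rpow_mul_log_pow a n hε.1 hc₀)
      ((continuousOn_rpow_mul_log_pow_div_one_sub (a + 1) n).mono hsub).intervalIntegrable]
    refine intervalIntegral.integral_congr fun t ht => ?_
    obtain ⟨ht₀, ht₁⟩ := hsub ht
    have : 1 - t ≠ 0 := sub_ne_zero.2 ht₁.ne'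
    rw [rpow_add_one ht₀.ne']
    field_simp
    ring

theorem hasNeutrixLim_integral_div_self {h : ℝ → ℝ} {d : ℝ} (hd : 0 < d)
    (hcont : ContinuousOn h (Icc 0 d)) (hdiff : DifferentiableAt ℝ h 0) :
    HasNeutrixLim fun ε => ∫ s in ε..d, h s / s := by
  have hslope : ContinuousOn (dslope h 0) (Icc 0 d) := fun s hs => by
    rcases eq_or_ne s 0 with rfl | hs₀
    · exact (continuousAt_dslope_same.2 hdiff).continuousWithinAt
    · exact (continuousWithinAt_dslope_of_ne hs₀).2 (hcont s hs)
  refine ((hasNeutrixLim_integral_of_integrableOn hd hslope.integrableOn_Icc).add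
    ((hasNeutrixLim_integral_rpow_mul_log_pow (-1) 0 hd).const_mul (h 0))).congr ?_
  filter_upwards [Ioo_mem_nhdsGT hd] with ε hε
  have hsub : uIcc ε d ⊆ Icc 0 d := by
    rw [uIcc_of_le hε.2.le]; exact Icc_subset_Icc_left hε.1.le
  rw [← intervalIntegral.integral_const_mul, ← intervalIntegral.integral_add
    (hslope.mono hsub).intervalIntegrable
    ((intervalIntegrable_rpow_mul_log_pow (-1) 0 hε.1 hd).const_mul _)]
  refine intervalIntegral.integral_congr fun s hs => ?_
  have hs₀ : s ≠ 0 := ((lt_min hε.1 hd).trans_le hs.1).ne'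
  simp only [dslope_of_ne h hs₀, slope_def_field, rpow_neg_one, pow_zero, mul_one, sub_zero]
  field_simp
  ring

theorem integral_Ioo_eq_integral_add_integral_comp_one_sub {f : ℝ → ℝ}
    (hf : ContinuousOn f (Ioo 0 1)) {ε : ℝ} (hε : ε ∈ Ioo 0 (1 / 2)) :
    ∫ t in Ioo ε (1 - ε), f t = (∫ t in ε..1 / 2, f t) + ∫ s in ε..1 / 2, f (1 - s) := by
  obtain ⟨hε₀, hε₁⟩ := hε
  have hint : ∀ {u v : ℝ}, u ∈ Icc ε (1 - ε) → v ∈ Icc ε (1 - ε) →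
      IntervalIntegrable f volume u v := fun hu hv =>
    (hf.mono ((uIcc_subset_Icc hu hv).trans (Icc_subset_Ioo hε₀ (by linarith)))).intervalIntegrable
  have hhalf : (1 / 2 : ℝ) ∈ Icc ε (1 - ε) := ⟨hε₁.le, by linarith⟩
  rw [intervalIntegral.integral_comp_sub_left, ← integral_Ioc_eq_integral_Ioo,
    ← intervalIntegral.integral_of_le (by linarith), show (1 : ℝ) - 1 / 2 = 1 / 2 by norm_num,
    intervalIntegral.integral_add_adjacent_intervals (hint (left_mem_Icc.2 (by linarith)) hhalf)
      (hint hhalf (right_mem_Icc.2 (by linarith)))]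

theorem stmt12 (x : ℝ) (n : ℕ) :
    ∃ c : ℝ, NeutrixLim (fun ε => ∫ t in Set.Ioo ε (1 - ε),
      t ^ (x - 1) * Real.log t ^ n / (1 - t)) c := by
  obtain ⟨m, hm⟩ := exists_nat_gt (1 - x)
  have hhalf : (0 : ℝ) < 1 / 2 := by norm_num
  have near_zero := hasNeutrixLim_integral_rpow_mul_log_pow_div_one_sub m (a := x - 1)
    (by linarith) n hhalf (by norm_num)
  have near_one :=
    hasNeutrixLim_integral_div_self (h := fun s => (1 - s) ^ (x - 1) * log (1 - s) ^ n)
    hhalf ((continuousOn_rpow_mul_log_pow (x - 1) n).comp (continuousOn_const.sub continuousOn_id)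
      fun s hs => by simp only [mem_Ioi]; linarith [hs.2])
    (by fun_prop (disch := norm_num))
  refine (near_zero.add near_one).congr ?_
  filter_upwards [Ioo_mem_nhdsGT hhalf] with ε hε
  rw [integral_Ioo_eq_integral_add_integral_comp_one_sub
    (continuousOn_rpow_mul_log_pow_div_one_sub (x - 1) n) hε]
  simp_rw [sub_sub_cancel]
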